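/- arXiv:math/0302243 — 9 statements merged into one kernel-verified Lean document; each statement's English description precedes it below -/
import Mathlib

section
/- If π is a probability measure on ℝ₊ⁿ with E_π[(xᵢ − Kᵢ)₊] = pᵢ for given Kᵢ ≥ 0 and all i, then for any w ∈ ℝ₊ⁿ with strike K₀ ≥ 0, E_π[(wᵀx − K₀)₊] ≤ wᵀp + (wᵀK − K₀)₊. -/
open MeasureTheory Filter

theorem max_sum_mul_sub_le {ι α : Type*} [CommRing α] [LinearOrder α] [IsOrderedRing α]
    (s : Finset ι) (w x K : ι → α) (K0 : α) (hw : ∀ i ∈ s, 0 ≤ w i) :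
    max (∑ i ∈ s, w i * x i - K0) 0 ≤
      ∑ i ∈ s, w i * max (x i - K i) 0 + max (∑ i ∈ s, w i * K i - K0) 0 := by
  have hsplit : ∑ i ∈ s, w i * x i - K0 =
      ∑ i ∈ s, w i * (x i - K i) + (∑ i ∈ s, w i * K i - K0) := by
    simp only [mul_sub, Finset.sum_sub_distrib]
    ring
  refine max_le ?_ ?_
  · rw [hsplit]
    gcongr with i hi
    · exact hw i hi
    · exact le_max_left _ _
    · exact le_max_left _ _
  · exact add_nonneg (Finset.sum_nonneg fun i hi => mul_nonneg (hw i hi) (le_max_right _ _))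
      (le_max_right _ _)

theorem upper_bound_no_forward_general {n : ℕ} (π : Measure (Fin n → ℝ))
    [IsProbabilityMeasure π] (w K p : Fin n → ℝ) (K0 : ℝ)
    (hw : ∀ i, 0 ≤ w i)
    (hintK : ∀ i, Integrable (fun x => max (x i - K i) 0) π)
    (hp : ∀ i, ∫ x, max (x i - K i) 0 ∂π = p i) :
    ∫ x, max (∑ i, w i * x i - K0) 0 ∂π ≤
      ∑ i, w i * p i + max (∑ i, w i * K i - K0) 0 := by
  have hintCalls : Integrable (fun x => ∑ i, w i * max (x i - K i) 0) π :=
    integrable_finsetSum _ fun i _ => (hintK i).const_mul (w i)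
  calc ∫ x, max (∑ i, w i * x i - K0) 0 ∂π
      ≤ ∫ x, (∑ i, w i * max (x i - K i) 0 + max (∑ i, w i * K i - K0) 0) ∂π :=
        integral_mono_of_nonneg (ae_of_all _ fun _ => le_max_right _ _)
          (hintCalls.add (integrable_const _))
          (ae_of_all _ fun x => max_sum_mul_sub_le _ w x K K0 fun i _ => hw i)
    _ = ∑ i, w i * p i + max (∑ i, w i * K i - K0) 0 := by
        rw [integral_add hintCalls (integrable_const _), integral_finsetSum _
          fun i _ => (hintK i).const_mul (w i)]
        simp [integral_const_mul, hp]

theorem upper_bound_no_forward {n : ℕ} (π : Measure (Fin n → ℝ))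
    [IsProbabilityMeasure π] (w K p : Fin n → ℝ) (K0 : ℝ)
    (hw : ∀ i, 0 ≤ w i) (hK : ∀ i, 0 ≤ K i) (hK0 : 0 ≤ K0)
    (hsupp : ∀ᵐ x ∂π, ∀ i, 0 ≤ x i)
    (hintK : ∀ i, Integrable (fun x => max (x i - K i) 0) π)
    (hintC : Integrable (fun x => max (∑ i, w i * x i - K0) 0) π)
    (hp : ∀ i, ∫ x, max (x i - K i) 0 ∂π = p i) :
    ∫ x, max (∑ i, w i * x i - K0) 0 ∂π ≤
      ∑ i, w i * p i + max (∑ i, w i * K i - K0) 0 :=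
  upper_bound_no_forward_general π w K p K0 hw hintK hp
end

section
/- Let z* = (p₀*, g₀*, …, g_{2m+1}*) be a feasible point of the finite LP (with constraints ⟨gᵢ,(w_j,K_j)−(wᵢ,Kᵢ)⟩ ≤ p_j − pᵢ for all i,j; gᵢ componentwise nonnegative in the first n coordinates; −1 ≤ g_{i,n+1} ≤ 0; and ⟨gᵢ,(wᵢ,Kᵢ)⟩ = pᵢ). Then the function C(w,K) = max_{0≤i≤2m+1} { pᵢ + ⟨gᵢ*, (w,K) − (wᵢ,Kᵢ)⟩ } is convex, positively homogeneous of degree one, nondecreasing in w, has slopes in K between −1 and 0, and interpolates: C(wᵢ,Kᵢ) = pᵢ for all i. -/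
open MeasureTheory Filter

theorem finite_LP_feasible_point_properties {n m : ℕ}
    (w : Fin (2*m+2) → Fin n → ℝ) (Ks : Fin (2*m+2) → ℝ)
    (p : Fin (2*m+2) → ℝ) (g : Fin (2*m+2) → (Fin n → ℝ) × ℝ)
    (hfeas : ∀ i j, (∑ k, (g i).1 k * (w j k - w i k)) + (g i).2 * (Ks j - Ks i)
      ≤ p j - p i)
    (hg1 : ∀ i k, 0 ≤ (g i).1 k)
    (hg2 : ∀ i, -1 ≤ (g i).2 ∧ (g i).2 ≤ 0)
    (hgeq : ∀ i, (∑ k, (g i).1 k * w i k) + (g i).2 * Ks i = p i) :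
    let C : (Fin n → ℝ) → ℝ → ℝ := fun v K =>
      Finset.univ.sup' ⟨⟨0, by omega⟩, Finset.mem_univ _⟩
        (fun i => p i + ((∑ k, (g i).1 k * (v k - w i k)) + (g i).2 * (K - Ks i)))
    ConvexOn ℝ Set.univ (fun vK : (Fin n → ℝ) × ℝ => C vK.1 vK.2) ∧
    (∀ c : ℝ, 0 ≤ c → ∀ v K, C (c • v) (c * K) = c * C v K) ∧
    (∀ v v' : Fin n → ℝ, v ≤ v' → ∀ K, C v K ≤ C v' K) ∧
    (∀ v K K', K ≤ K' → C v K' ≤ C v K ∧ C v K - C v K' ≤ K' - K) ∧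
    (∀ i, C (w i) (Ks i) = p i) := by
  intro C
  have hne : (Finset.univ : Finset (Fin (2*m+2))).Nonempty :=
    ⟨⟨0, by omega⟩, Finset.mem_univ _⟩
  -- Each term equals the linear function L i v K = ∑ g₁ v + g₂ K
  set L : Fin (2*m+2) → (Fin n → ℝ) → ℝ → ℝ :=
    fun i v K => (∑ k, (g i).1 k * v k) + (g i).2 * K with hL
  have hterm : ∀ i v K,
      p i + ((∑ k, (g i).1 k * (v k - w i k)) + (g i).2 * (K - Ks i)) = L i v K := by
    intro i v K
    have := hgeq i
    simp only [hL, mul_sub, Finset.sum_sub_distrib]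
    linarith
  have hC : ∀ v K, C v K = Finset.univ.sup' hne (fun i => L i v K) := by
    intro v K
    simp only [C, hterm]
  have hCle : ∀ v K r, (∀ i, L i v K ≤ r) → C v K ≤ r := by
    intro v K r h
    rw [hC]
    exact Finset.sup'_le _ _ fun i _ => h i
  have hleC : ∀ i v K, L i v K ≤ C v K := by
    intro i v K
    rw [hC]
    exact Finset.le_sup' (fun j => L j v K) (Finset.mem_univ i)
  have hex : ∀ v K, ∃ i, C v K = L i v K := by
    intro v K
    obtain ⟨i, _, hi⟩ := Finset.exists_mem_eq_sup' hne (fun i => L i v K)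
    exact ⟨i, by rw [hC, hi]⟩
  refine ⟨?_, ?_, ?_, ?_, ?_⟩
  · refine ⟨convex_univ, ?_⟩
    rintro ⟨x, Kx⟩ - ⟨y, Ky⟩ - a b ha hb hab
    simp only [Prod.smul_mk, Prod.mk_add_mk, smul_eq_mul]
    apply hCle
    intro i
    have hx := hleC i x Kx
    have hy := hleC i y Ky
    have : L i (a • x + b • y) (a * Kx + b * Ky) = a * L i x Kx + b * L i y Ky := by
      simp only [hL, Pi.add_apply, Pi.smul_apply, smul_eq_mul]
      have hk : ∀ k ∈ Finset.univ, (g i).1 k * (a * x k + b * y k)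
          = a * ((g i).1 k * x k) + b * ((g i).1 k * y k) := fun k _ => by ring
      rw [Finset.sum_congr rfl hk, Finset.sum_add_distrib, ← Finset.mul_sum, ← Finset.mul_sum]
      ring
    rw [this]
    have := mul_le_mul_of_nonneg_left hx ha
    have := mul_le_mul_of_nonneg_left hy hb
    linarith
  · intro c hc v K
    have hlin : ∀ i, L i (c • v) (c * K) = c * L i v K := by
      intro i
      simp only [hL, Pi.smul_apply, smul_eq_mul]
      have hk : ∀ k ∈ Finset.univ, (g i).1 k * (c * v k)
          = c * ((g i).1 k * v k) := fun k _ => by ring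
      rw [Finset.sum_congr rfl hk, ← Finset.mul_sum]
      ring
    apply le_antisymm
    · apply hCle
      intro i
      rw [hlin i]
      exact mul_le_mul_of_nonneg_left (hleC i v K) hc
    · obtain ⟨i, hi⟩ := hex v K
      rw [hi, ← hlin i]
      exact hleC i _ _
  · intro v v' hvv K
    apply hCle
    intro i
    refine le_trans ?_ (hleC i v' K)
    simp only [hL]
    gcongr with k
    · exact hg1 i k
    · exact hvv k
  · intro v K K' hKK
    constructor
    · apply hCle
      intro i
      refine le_trans ?_ (hleC i v K)
      simp only [hL]
      have := (hg2 i).2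
      nlinarith
    · obtain ⟨i, hi⟩ := hex v K
      have h2 := hleC i v K'
      have := (hg2 i).1
      simp only [hL] at hi h2 ⊢
      nlinarith
  · intro i
    apply le_antisymm
    · apply hCle
      intro j
      have := hfeas j i
      have := hgeq j
      simp only [hL, mul_sub, Finset.sum_sub_distrib] at *
      linarith
    · have := hleC i (w i) (Ks i)
      simp only [hL] at this
      rw [hgeq i] at this
      exact this
end

section
/- For any λ, μ ∈ ℝⁿ with λ + μ ≥ w (componentwise), w ∈ ℝ₊ⁿ, K ∈ ℝ₊ⁿ, K₀ ≥ 0: sup over x ≥ 0 of (wᵀx − K₀)₊ − λᵀ(x−K)₊ − μᵀx equals max( ((−μ)₊)ᵀK, ((w−μ)₊)ᵀK − K₀ ), where (x−K)₊ and (·)₊ are taken componentwise. -/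
open MeasureTheory Filter

theorem dual_inner_sup {n : ℕ} (w K lam mu : Fin n → ℝ) (K0 : ℝ)
    (hw : ∀ i, 0 < w i) (hK : ∀ i, 0 ≤ K i) (hK0 : 0 ≤ K0)
    (hlm : ∀ i, w i ≤ lam i + mu i) :
    IsLUB ((fun x : Fin n → ℝ =>
        max (∑ i, w i * x i - K0) 0 - ∑ i, lam i * max (x i - K i) 0
          - ∑ i, mu i * x i) '' {x | ∀ i, 0 ≤ x i})
      (max (∑ i, max (-mu i) 0 * K i) (∑ i, max (w i - mu i) 0 * K i - K0)) := by
  set A1 := ∑ i, max (-mu i) 0 * K i with hA1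
  set A2 := ∑ i, max (w i - mu i) 0 * K i - K0 with hA2
  -- Upper bound: every value of the function is ≤ max A1 A2
  have hub : ∀ x : Fin n → ℝ, (∀ i, 0 ≤ x i) →
      max (∑ i, w i * x i - K0) 0 - ∑ i, lam i * max (x i - K i) 0
        - ∑ i, mu i * x i ≤ max A1 A2 := by
    intro x hx
    have h2 : ∀ i, -(lam i * max (x i - K i) 0) - mu i * x i ≤ max (-mu i) 0 * K i := by
      intro i
      rcases le_or_gt (x i) (K i) with h | h
      · rw [max_eq_right (by linarith)]
        nlinarith [le_max_left (-mu i) 0, le_max_right (-mu i) 0, hx i, hK i,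
          mul_nonneg (le_max_right (-mu i) 0) (sub_nonneg.2 h)]
      · rw [max_eq_left (by linarith)]
        nlinarith [mul_nonneg (by linarith [hlm i] : (0:ℝ) ≤ lam i + mu i - w i)
            (by linarith : (0:ℝ) ≤ x i - K i),
          mul_nonneg (hw i).le (by linarith : (0:ℝ) ≤ x i - K i),
          mul_nonneg (by linarith [le_max_left (-mu i) 0] : (0:ℝ) ≤ max (-mu i) 0 + mu i) (hK i)]
    have h1 : ∀ i, w i * x i - lam i * max (x i - K i) 0 - mu i * x i
        ≤ max (w i - mu i) 0 * K i := by
      intro i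
      rcases le_or_gt (x i) (K i) with h | h
      · rw [max_eq_right (by linarith)]
        nlinarith [mul_nonneg (le_max_right (w i - mu i) 0) (sub_nonneg.2 h),
          mul_nonneg (by linarith [le_max_left (w i - mu i) 0] :
            (0:ℝ) ≤ max (w i - mu i) 0 - (w i - mu i)) (hx i)]
      · rw [max_eq_left (by linarith)]
        nlinarith [mul_nonneg (by linarith [hlm i] : (0:ℝ) ≤ lam i + mu i - w i)
            (by linarith : (0:ℝ) ≤ x i - K i),
          mul_nonneg (by linarith [le_max_left (w i - mu i) 0] :
            (0:ℝ) ≤ max (w i - mu i) 0 - (w i - mu i)) (hK i)]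
    have s2 : ∑ i, (-(lam i * max (x i - K i) 0) - mu i * x i) ≤ A1 :=
      Finset.sum_le_sum fun i _ => h2 i
    have s1 : ∑ i, (w i * x i - lam i * max (x i - K i) 0 - mu i * x i)
        ≤ ∑ i, max (w i - mu i) 0 * K i :=
      Finset.sum_le_sum fun i _ => h1 i
    have e2 : ∑ i, (-(lam i * max (x i - K i) 0) - mu i * x i)
        = -∑ i, lam i * max (x i - K i) 0 - ∑ i, mu i * x i := by
      rw [Finset.sum_sub_distrib, Finset.sum_neg_distrib]
    have e1 : ∑ i, (w i * x i - lam i * max (x i - K i) 0 - mu i * x i)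
        = ∑ i, w i * x i - ∑ i, lam i * max (x i - K i) 0 - ∑ i, mu i * x i := by
      rw [Finset.sum_sub_distrib, Finset.sum_sub_distrib]
    rcases le_total (∑ i, w i * x i - K0) 0 with h | h
    · rw [max_eq_right h]
      have := le_max_left A1 A2
      linarith [e2 ▸ s2]
    · rw [max_eq_left h]
      have := le_max_right A1 A2
      linarith [e1 ▸ s1]
  constructor
  · rintro v ⟨x, hx, rfl⟩
    exact hub x hx
  · intro b hb
    rcases le_total A2 A1 with hc | hc
    · -- the point y attains A1 = max A1 A2
      set y : Fin n → ℝ := fun i => if mu i < 0 then K i else 0 with hy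
      have hy0 : ∀ i, 0 ≤ y i := by
        intro i; simp only [hy]; split <;> [exact hK i; exact le_rfl]
      have hyK : ∀ i, y i ≤ K i := by
        intro i; simp only [hy]; split <;> [exact le_rfl; exact hK i]
      have hlam0 : ∑ i, lam i * max (y i - K i) 0 = 0 := by
        apply Finset.sum_eq_zero; intro i _
        rw [max_eq_right (by linarith [hyK i])]; ring
      have hmuy : ∑ i, mu i * y i = -A1 := by
        rw [hA1, ← Finset.sum_neg_distrib]
        apply Finset.sum_congr rfl; intro i _
        simp only [hy]
        rcases lt_or_ge (mu i) 0 with h | h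
        · rw [if_pos h, max_eq_left (by linarith)]; ring
        · rw [if_neg (not_lt.2 h), max_eq_right (by linarith)]; ring
      have hge : A1 ≤ max (∑ i, w i * y i - K0) 0 - ∑ i, lam i * max (y i - K i) 0
          - ∑ i, mu i * y i := by
        rw [hlam0, hmuy]
        have := le_max_right (∑ i, w i * y i - K0) 0
        linarith
      have hmax : max A1 A2 = A1 := max_eq_left hc
      have hval : (fun x : Fin n → ℝ =>
          max (∑ i, w i * x i - K0) 0 - ∑ i, lam i * max (x i - K i) 0
            - ∑ i, mu i * x i) y = max A1 A2 := by
        have hle := hub y hy0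
        simp only
        rw [hmax] at hle ⊢
        linarith
      exact hb ⟨y, hy0, hval⟩
    · -- the point z attains A2 = max A1 A2
      set z : Fin n → ℝ := fun i => if 0 < w i - mu i then K i else 0 with hz
      have hz0 : ∀ i, 0 ≤ z i := by
        intro i; simp only [hz]; split <;> [exact hK i; exact le_rfl]
      have hzK : ∀ i, z i ≤ K i := by
        intro i; simp only [hz]; split <;> [exact le_rfl; exact hK i]
      have hlam0 : ∑ i, lam i * max (z i - K i) 0 = 0 := by
        apply Finset.sum_eq_zero; intro i _
        rw [max_eq_right (by linarith [hzK i])]; ring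
      have hwz : ∑ i, (w i - mu i) * z i = ∑ i, max (w i - mu i) 0 * K i := by
        apply Finset.sum_congr rfl; intro i _
        simp only [hz]
        rcases lt_or_ge 0 (w i - mu i) with h | h
        · rw [if_pos h, max_eq_left (by linarith)]
        · rw [if_neg (not_lt.2 h), max_eq_right h]; ring
      have hsplit : ∑ i, (w i - mu i) * z i = ∑ i, w i * z i - ∑ i, mu i * z i := by
        rw [← Finset.sum_sub_distrib]
        exact Finset.sum_congr rfl fun i _ => by ring
      have hge : A2 ≤ max (∑ i, w i * z i - K0) 0 - ∑ i, lam i * max (z i - K i) 0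
          - ∑ i, mu i * z i := by
        rw [hlam0]
        have := le_max_left (∑ i, w i * z i - K0) 0
        rw [hA2, ← hwz, hsplit]
        linarith
      have hmax : max A1 A2 = A2 := max_eq_right hc
      have hval : (fun x : Fin n → ℝ =>
          max (∑ i, w i * x i - K0) 0 - ∑ i, lam i * max (x i - K i) 0
            - ∑ i, mu i * x i) z = max A1 A2 := by
        have hle := hub z hz0
        simp only
        rw [hmax] at hle ⊢
        linarith
      exact hb ⟨z, hz0, hval⟩
end

section
/- Let 0 ≤ pᵢ < qᵢ ≤ pᵢ + Kᵢ, Kᵢ > 0, w > 0, K₀ ≥ 0. Then for every probability measure π on ℝ₊ⁿ with E_π[xᵢ] = qᵢ and E_π[(xᵢ−Kᵢ)₊] = pᵢ, we have E_π[(wᵀx − K₀)₊] ≤ max_{0 ≤ j ≤ n+1} [ wᵀp + Σᵢ wᵢ min(qᵢ−pᵢ, β_j Kᵢ) − β_j K₀ ], where β_j = (q_j−p_j)/K_j for 1 ≤ j ≤ n, β₀ = 0 and β_{n+1} = 1. -/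
open MeasureTheory

/-!
Hedging: for weights `βᵢ ∈ [0,1]` and `x ≥ 0`, the payoff `(wᵀx - K₀)₊` is dominated pointwise by
holding `wᵢ(1 - βᵢ)` units of asset `i`, `wᵢβᵢ` calls `(xᵢ - Kᵢ)₊` and the cash `(Σ wᵢKᵢβᵢ - K₀)₊`;
integrating gives a bound in terms of `q` and `p` only. Writing `γᵢ = (qᵢ - pᵢ)/Kᵢ`, take `b` the least
of `0, 1, γⱼ` at which `Σ_{b < γᵢ} wᵢKᵢ ≤ K₀`, and `β` equal to `1` on `b < γᵢ`, `0` on `γᵢ < b`, and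
interpolated on `γᵢ = b` so that `Σ wᵢKᵢβᵢ = K₀` (unless `b ≤ 0`). This is complementary slackness
for `(β, b)`, so the hedging bound is at most the `b`-th term of the maximum.
-/

theorem min_eq_one_sub_mul_add_mul {x y β : ℝ} (h1 : y < x → β = 1) (h0 : x < y → β = 0) :
    min x y = (1 - β) * x + β * y := by
  rcases lt_trichotomy x y with h | rfl | h
  · rw [h0 h, min_eq_left h.le]; ring
  · rw [min_self]; ring
  · rw [h1 h, min_eq_right h.le]; ring

section WeakDuality

variable {ι : Type*} [Fintype ι]

theorem max_sum_sub_le_of_weights (w K β x : ι → ℝ) (K0 : ℝ) (hw : ∀ i, 0 ≤ w i)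
    (hβ : ∀ i, 0 ≤ β i ∧ β i ≤ 1) (hx : ∀ i, 0 ≤ x i) :
    max (∑ i, w i * x i - K0) 0 ≤
      ∑ i, w i * ((1 - β i) * x i + β i * max (x i - K i) 0) +
        max (∑ i, w i * K i * β i - K0) 0 := by
  have hcall : ∀ i ∈ Finset.univ, w i * x i ≤
      w i * ((1 - β i) * x i + β i * max (x i - K i) 0) + w i * K i * β i := fun i _ => by
    nlinarith [mul_nonneg (mul_nonneg (hw i) (hβ i).1) (sub_nonneg.2 (le_max_left (x i - K i) 0))]
  have hput : ∀ i, 0 ≤ (1 - β i) * x i + β i * max (x i - K i) 0 := fun i => by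
    nlinarith [(hβ i).1, (hβ i).2, hx i, le_max_right (x i - K i) 0]
  refine max_le ?_ ?_
  · have := Finset.sum_le_sum hcall
    rw [Finset.sum_add_distrib] at this
    linarith [le_max_left (∑ i, w i * K i * β i - K0) 0]
  · have := Finset.sum_nonneg fun i (_ : i ∈ Finset.univ) => mul_nonneg (hw i) (hput i)
    linarith [le_max_right (∑ i, w i * K i * β i - K0) 0]

theorem integral_max_sum_sub_le_of_weights {μ : Measure (ι → ℝ)} [IsProbabilityMeasure μ]
    (w K β : ι → ℝ) (K0 : ℝ) (hw : ∀ i, 0 ≤ w i) (hβ : ∀ i, 0 ≤ β i ∧ β i ≤ 1)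
    (hsupp : ∀ᵐ x ∂μ, ∀ i, 0 ≤ x i) (hintx : ∀ i, Integrable (fun x => x i) μ)
    (hintK : ∀ i, Integrable (fun x => max (x i - K i) 0) μ) :
    ∫ x, max (∑ i, w i * x i - K0) 0 ∂μ ≤
      ∑ i, w i * ((1 - β i) * ∫ x, x i ∂μ + β i * ∫ x, max (x i - K i) 0 ∂μ) +
        max (∑ i, w i * K i * β i - K0) 0 := by
  have hint : ∀ i ∈ Finset.univ, Integrable
      (fun x => w i * ((1 - β i) * x i + β i * max (x i - K i) 0)) μ := fun i _ =>
    (((hintx i).const_mul _).add ((hintK i).const_mul _)).const_mul _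
  calc ∫ x, max (∑ i, w i * x i - K0) 0 ∂μ
      ≤ ∫ x, (∑ i, w i * ((1 - β i) * x i + β i * max (x i - K i) 0) +
          max (∑ i, w i * K i * β i - K0) 0) ∂μ :=
        integral_mono_of_nonneg (ae_of_all _ fun _ => le_max_right _ _)
          ((integrable_finsetSum _ hint).add (integrable_const _))
          (hsupp.mono fun x hx => max_sum_sub_le_of_weights w K β x K0 hw hβ hx)
    _ = _ := by
      rw [integral_add (integrable_finsetSum _ hint) (integrable_const _),
        integral_finsetSum _ hint, integral_const, probReal_univ, one_smul]
      congr 1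
      refine Finset.sum_congr rfl fun i _ => ?_
      rw [integral_const_mul, integral_add ((hintx i).const_mul _) ((hintK i).const_mul _),
        integral_const_mul, integral_const_mul]

theorem exists_threshold (γ c : ι → ℝ) {K0 : ℝ} (hK0 : 0 ≤ K0) (hγ : ∀ i, γ i ≤ 1)
    {C : Finset ℝ} (h0 : 0 ∈ C) (h1 : 1 ∈ C) (hγC : ∀ i, γ i ∈ C) :
    ∃ b ∈ C, ∑ i with b < γ i, c i ≤ K0 ∧ (b ≤ 0 ∨ K0 ≤ ∑ i with b ≤ γ i, c i) := by
  classical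
  set T := C.filter fun b => ∑ i with b < γ i, c i ≤ K0
  have h1T : 1 ∈ T := Finset.mem_filter.2 ⟨h1, by simp [fun i => (hγ i).not_gt, hK0]⟩
  obtain ⟨hbC, hbT⟩ := Finset.mem_filter.1 (T.min'_mem ⟨1, h1T⟩)
  refine ⟨_, hbC, hbT, ?_⟩
  by_contra! ⟨hb, hlt⟩
  set b := T.min' ⟨1, h1T⟩
  have h0D : 0 ∈ C.filter (· < b) := Finset.mem_filter.2 ⟨h0, hb⟩
  obtain ⟨hb'C, hb'b⟩ := Finset.mem_filter.1 ((C.filter (· < b)).max'_mem ⟨0, h0D⟩)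
  set b' := (C.filter (· < b)).max' ⟨0, h0D⟩
  have hgap : ∀ i, b' < γ i ↔ b ≤ γ i := fun i => by
    refine ⟨fun h => not_lt.1 fun hib => ?_, hb'b.trans_le⟩
    exact h.not_ge ((C.filter (· < b)).le_max' _ (Finset.mem_filter.2 ⟨hγC i, hib⟩))
  have hb'T : b' ∈ T := Finset.mem_filter.2 ⟨hb'C, by simpa only [hgap] using hlt.le⟩
  exact hb'b.not_ge (T.min'_le _ hb'T)

theorem exists_dual_weights (γ c : ι → ℝ) {K0 : ℝ} (hK0 : 0 ≤ K0) (hγ : ∀ i, γ i ≤ 1)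
    {C : Finset ℝ} (h0 : 0 ∈ C) (h1 : 1 ∈ C) (hγC : ∀ i, γ i ∈ C) :
    ∃ b ∈ C, ∃ β : ι → ℝ, (∀ i, 0 ≤ β i ∧ β i ≤ 1) ∧ (∀ i, b < γ i → β i = 1) ∧
      (∀ i, γ i < b → β i = 0) ∧ ∑ i, c i * β i ≤ K0 ∧ 0 ≤ b * (∑ i, c i * β i - K0) := by
  classical
  obtain ⟨b, hbC, hS, hcase⟩ := exists_threshold γ c hK0 hγ h0 h1 hγC
  set S := ∑ i with b < γ i, c i
  set S' := ∑ i with b ≤ γ i, c i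
  obtain ⟨s, t, hs, ht, hst, hval, hslack⟩ : ∃ s t : ℝ, 0 ≤ s ∧ 0 ≤ t ∧ s + t = 1 ∧
      s * S + t * S' ≤ K0 ∧ 0 ≤ b * (s * S + t * S' - K0) := by
    rcases hcase with hb | hK
    · exact ⟨1, 0, zero_le_one, le_rfl, add_zero 1, by simpa using hS,
        by simpa using mul_nonneg_of_nonpos_of_nonpos hb (sub_nonpos.2 hS)⟩
    · have hK0S : K0 ∈ segment ℝ S S' := by rw [segment_eq_Icc (hS.trans hK)]; exact ⟨hS, hK⟩
      obtain ⟨s, t, hs, ht, hst, h⟩ := hK0S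
      simp only [smul_eq_mul] at h
      exact ⟨s, t, hs, ht, hst, h.le, by rw [h, sub_self, mul_zero]⟩
  have hsum : ∑ i, c i * (s * (if b < γ i then 1 else 0) + t * (if b ≤ γ i then 1 else 0)) =
      s * S + t * S' := by
    simp [S, S', Finset.sum_filter, mul_add, Finset.sum_add_distrib, Finset.mul_sum, mul_comm]
  refine ⟨b, hbC, fun i => s * (if b < γ i then 1 else 0) + t * (if b ≤ γ i then 1 else 0),
    fun i => ?_, fun i hi => ?_, fun i hi => ?_, by rwa [hsum], by rwa [hsum]⟩
  · dsimp only; constructor <;> split_ifs <;> linarith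
  · simp [hi, hi.le, hst]
  · simp [hi.not_gt, hi.not_ge]

theorem sum_min_eq_of_weights (p q K w β : ι → ℝ) (K0 b : ℝ)
    (h1 : ∀ i, b * K i < q i - p i → β i = 1) (h0 : ∀ i, q i - p i < b * K i → β i = 0) :
    ∑ i, w i * p i + ∑ i, w i * min (q i - p i) (b * K i) - b * K0 =
      ∑ i, w i * ((1 - β i) * q i + β i * p i) + b * (∑ i, w i * K i * β i - K0) := by
  have h : ∀ i ∈ Finset.univ, w i * min (q i - p i) (b * K i) =
      w i * ((1 - β i) * q i + β i * p i) - w i * p i + b * (w i * K i * β i) := fun i _ => by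
    rw [min_eq_one_sub_mul_add_mul (h1 i) (h0 i)]; ring
  rw [Finset.sum_congr rfl h, Finset.sum_add_distrib, Finset.sum_sub_distrib, ← Finset.mul_sum]
  ring

end WeakDuality

theorem weak_duality_upper_forward_general {n : ℕ} (p q K w : Fin n → ℝ) (K0 : ℝ)
    (hK : ∀ i, 0 < K i) (hw : ∀ i, 0 < w i) (hK0 : 0 ≤ K0)
    (hqk : ∀ i, q i ≤ p i + K i)
    (π : Measure (Fin n → ℝ)) [IsProbabilityMeasure π]
    (hsupp : ∀ᵐ x ∂π, ∀ i, 0 ≤ x i)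
    (hintx : ∀ i, Integrable (fun x => x i) π)
    (hintK : ∀ i, Integrable (fun x => max (x i - K i) 0) π)
    (hq : ∀ i, ∫ x, x i ∂π = q i)
    (hpp : ∀ i, ∫ x, max (x i - K i) 0 ∂π = p i) :
    ∫ x, max (∑ i, w i * x i - K0) 0 ∂π ≤
      (insert (0:ℝ) (insert 1 (Finset.image (fun j => (q j - p j) / K j)
        Finset.univ))).sup' (Finset.insert_nonempty _ _)
        (fun β => ∑ i, w i * p i + ∑ i, w i * min (q i - p i) (β * K i) - β * K0) := by
  obtain ⟨b, hbC, β, hβ, hβ1, hβ0, hsum, hslack⟩ :=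
    exists_dual_weights (fun j => (q j - p j) / K j) (fun i => w i * K i) hK0
      (fun i => (div_le_one (hK i)).2 (by linarith [hqk i]))
      (C := insert 0 (insert 1 (Finset.image (fun j => (q j - p j) / K j) Finset.univ)))
      (by simp) (by simp) (by simp)
  calc ∫ x, max (∑ i, w i * x i - K0) 0 ∂π
      ≤ ∑ i, w i * ((1 - β i) * q i + β i * p i) + max (∑ i, w i * K i * β i - K0) 0 := by
        simpa only [hq, hpp] using integral_max_sum_sub_le_of_weights w K β K0
          (fun i => (hw i).le) hβ hsupp hintx hintK
    _ ≤ ∑ i, w i * p i + ∑ i, w i * min (q i - p i) (b * K i) - b * K0 := by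
        rw [sum_min_eq_of_weights p q K w β K0 b
          (fun i h => hβ1 i ((lt_div_iff₀ (hK i)).2 h))
          (fun i h => hβ0 i ((div_lt_iff₀ (hK i)).2 h)), max_eq_right (by linarith)]
        linarith
    _ ≤ _ := by apply Finset.le_sup' _ hbC

theorem weak_duality_upper_forward {n : ℕ} (p q K w : Fin n → ℝ) (K0 : ℝ)
    (hp : ∀ i, 0 ≤ p i) (hK : ∀ i, 0 < K i) (hw : ∀ i, 0 < w i) (hK0 : 0 ≤ K0)
    (hpq : ∀ i, p i < q i) (hqk : ∀ i, q i ≤ p i + K i)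
    (π : Measure (Fin n → ℝ)) [IsProbabilityMeasure π]
    (hsupp : ∀ᵐ x ∂π, ∀ i, 0 ≤ x i)
    (hintC : Integrable (fun x => max (∑ i, w i * x i - K0) 0) π)
    (hintx : ∀ i, Integrable (fun x => x i) π)
    (hintK : ∀ i, Integrable (fun x => max (x i - K i) 0) π)
    (hq : ∀ i, ∫ x, x i ∂π = q i)
    (hpp : ∀ i, ∫ x, max (x i - K i) 0 ∂π = p i) :
    ∫ x, max (∑ i, w i * x i - K0) 0 ∂π ≤
      (insert (0:ℝ) (insert 1 (Finset.image (fun j => (q j - p j) / K j)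
        Finset.univ))).sup' (Finset.insert_nonempty _ _)
        (fun β => ∑ i, w i * p i + ∑ i, w i * min (q i - p i) (β * K i) - β * K0) :=
  weak_duality_upper_forward_general p q K w K0 hK hw hK0 hqk π hsupp hintx hintK hq hpp
end

section
/- Suppose for every i, wᵢKᵢ ≥ K₀ with w > 0, K ≥ 0, K₀ ≥ 0, p ≥ 0. Then for each ε ∈ (0,1), the two-point distribution π_ε placing mass ε at the point x = ε⁻¹p + K and mass 1−ε at 0 satisfies E_{π_ε}[(xᵢ−Kᵢ)₊] = pᵢ for all i, and E_{π_ε}[(wᵀx−K₀)₊] → wᵀp as ε → 0. -/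
/-! The atom at `p / ε + K` carries mass `ε`, so it contributes exactly `pᵢ` to each coordinate
call, while the basket call equals `max (wᵀp + ε (wᵀK - K₀)) 0`, which tends to `wᵀp ≥ 0`. The atom
at `0` contributes nothing because `K, K₀ ≥ 0`. -/

open MeasureTheory Filter

section TwoPointMeasure

variable {α : Type*} [MeasurableSpace α]

lemma isProbabilityMeasure_ofReal_smul_dirac_add {t : ℝ} (ht₀ : 0 ≤ t) (ht₁ : t ≤ 1) (a b : α) :
    IsProbabilityMeasure
      (ENNReal.ofReal t • Measure.dirac a + ENNReal.ofReal (1 - t) • Measure.dirac b) := by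
  constructor
  simp only [Measure.add_apply, Measure.smul_apply, measure_univ, smul_eq_mul, mul_one]
  rw [← ENNReal.ofReal_add ht₀ (sub_nonneg.2 ht₁), add_sub_cancel, ENNReal.ofReal_one]

lemma integral_ofReal_smul_dirac_add [MeasurableSingletonClass α] {c d : ℝ} (hc : 0 ≤ c)
    (hd : 0 ≤ d) (f : α → ℝ) (a b : α) :
    ∫ x, f x ∂(ENNReal.ofReal c • Measure.dirac a + ENNReal.ofReal d • Measure.dirac b) =
      c * f a + d * f b := by
  rw [integral_add_measure
      ((integrable_dirac enorm_lt_top).smul_measure ENNReal.ofReal_ne_top)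
      ((integrable_dirac enorm_lt_top).smul_measure ENNReal.ofReal_ne_top),
    integral_smul_measure, integral_smul_measure, integral_dirac, integral_dirac,
    ENNReal.toReal_ofReal hc, ENNReal.toReal_ofReal hd, smul_eq_mul, smul_eq_mul]

end TwoPointMeasure

lemma mul_max_div_add_zero {ε : ℝ} (hε : 0 < ε) (a b : ℝ) :
    ε * max (a / ε + b) 0 = max (a + ε * b) 0 := by
  rw [mul_max_of_nonneg _ _ hε.le, mul_zero, mul_add, mul_div_cancel₀ _ hε.ne']

lemma tendsto_max_add_mul_zero {a : ℝ} (ha : 0 ≤ a) (b : ℝ) :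
    Tendsto (fun ε => max (a + ε * b) 0) (nhds 0) (nhds a) := by
  have hcont : Continuous fun ε : ℝ => max (a + ε * b) 0 := by fun_prop
  simpa [max_eq_left ha] using hcont.tendsto 0

theorem lower_bound_asymptotically_attained_general {n : ℕ} (w p K : Fin n → ℝ) (K0 : ℝ)
    (hw : ∀ i, 0 < w i) (hp : ∀ i, 0 ≤ p i) (hK : ∀ i, 0 ≤ K i) (hK0 : 0 ≤ K0) :
    let πf : ℝ → Measure (Fin n → ℝ) := fun ε =>
      ENNReal.ofReal ε • Measure.dirac (fun i => p i / ε + K i) +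
        ENNReal.ofReal (1 - ε) • Measure.dirac 0
    (∀ ε ∈ Set.Ioo (0:ℝ) 1, IsProbabilityMeasure (πf ε) ∧
      ∀ i, ∫ x, max (x i - K i) 0 ∂(πf ε) = p i) ∧
    Tendsto (fun ε => ∫ x, max (∑ i, w i * x i - K0) 0 ∂(πf ε))
      (nhdsWithin 0 (Set.Ioo 0 1)) (nhds (∑ i, w i * p i)) := by
  intro πf
  have hπf : ∀ ε ∈ Set.Ioo (0:ℝ) 1, ∀ f : (Fin n → ℝ) → ℝ,
      ∫ x, f x ∂(πf ε) = ε * f (fun i => p i / ε + K i) + (1 - ε) * f 0 :=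
    fun ε hε f => integral_ofReal_smul_dirac_add hε.1.le (sub_nonneg.2 hε.2.le) f _ _
  refine ⟨fun ε hε => ⟨isProbabilityMeasure_ofReal_smul_dirac_add hε.1.le hε.2.le _ _,
    fun i => ?_⟩, ?_⟩
  · rw [hπf ε hε, add_sub_cancel_right, max_eq_left (div_nonneg (hp i) hε.1.le),
      Pi.zero_apply, zero_sub, max_eq_right (neg_nonpos.2 (hK i)), mul_zero, add_zero,
      mul_div_cancel₀ _ hε.1.ne']
  · have hweighted : ∀ ε ∈ Set.Ioo (0:ℝ) 1, ∫ x, max (∑ i, w i * x i - K0) 0 ∂(πf ε) =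
        max (∑ i, w i * p i + ε * (∑ i, w i * K i - K0)) 0 := by
      intro ε hε
      have hsum : ∑ i, w i * (p i / ε + K i) - K0 =
          (∑ i, w i * p i) / ε + (∑ i, w i * K i - K0) := by
        simp only [mul_add, Finset.sum_add_distrib, Finset.sum_div, mul_div_assoc]
        ring
      rw [hπf ε hε, hsum, mul_max_div_add_zero hε.1]
      simp [hK0]
    have hS : 0 ≤ ∑ i, w i * p i := Finset.sum_nonneg fun i _ => mul_nonneg (hw i).le (hp i)
    refine ((tendsto_max_add_mul_zero hS (∑ i, w i * K i - K0)).mono_left nhdsWithin_le_nhds).congr' ?_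
    filter_upwards [self_mem_nhdsWithin] with ε hε using (hweighted ε hε).symm

theorem lower_bound_asymptotically_attained {n : ℕ} (w p K : Fin n → ℝ) (K0 : ℝ)
    (hw : ∀ i, 0 < w i) (hp : ∀ i, 0 ≤ p i) (hK : ∀ i, 0 ≤ K i) (hK0 : 0 ≤ K0)
    (hwK : ∀ i, K0 ≤ w i * K i) :
    let πf : ℝ → Measure (Fin n → ℝ) := fun ε =>
      ENNReal.ofReal ε • Measure.dirac (fun i => p i / ε + K i) +
        ENNReal.ofReal (1 - ε) • Measure.dirac 0
    (∀ ε ∈ Set.Ioo (0:ℝ) 1, IsProbabilityMeasure (πf ε) ∧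
      ∀ i, ∫ x, max (x i - K i) 0 ∂(πf ε) = p i) ∧
    Tendsto (fun ε => ∫ x, max (∑ i, w i * x i - K0) 0 ∂(πf ε))
      (nhdsWithin 0 (Set.Ioo 0 1)) (nhds (∑ i, w i * p i)) :=
  lower_bound_asymptotically_attained_general w p K K0 hw hp hK hK0
end

section
/- Let ν ∈ ℝ₊ⁿ with Σᵢνᵢ = 1 and νᵢ > 0 for all i, and p ∈ ℝ₊ⁿ, K ∈ ℝ₊ⁿ. Define the discrete distribution π on ℝ₊ⁿ placing mass νᵢ at the point x(i) whose i-th coordinate is pᵢ/νᵢ + Kᵢ and whose other coordinates are 0. Then E_π[(x_j − K_j)₊] = p_j for every j, and for any w > 0, K₀ ≥ 0: E_π[(wᵀx − K₀)₊] = Σᵢ ( wᵢpᵢ − νᵢ(K₀ − wᵢKᵢ) )₊. -/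
/-! Every atom of `π` lies on a coordinate axis, so each integral is a finite sum with one term
per atom. Since `K ≥ 0`, an atom on axis `i` pays nothing on the call on coordinate `j ≠ i`, and
the height `pᵢ / νᵢ + Kᵢ` is chosen so that the call on coordinate `i` pays `νᵢ · pᵢ / νᵢ = pᵢ`. -/

open MeasureTheory

theorem integral_sum_ofReal_smul_dirac {ι α E : Type*} [Fintype ι] [MeasurableSpace α]
    [MeasurableSingletonClass α] [NormedAddCommGroup E] [NormedSpace ℝ E] [CompleteSpace E]
    (c : ι → ℝ) (hc : ∀ i, 0 ≤ c i) (x : ι → α) (f : α → E) :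
    ∫ a, f a ∂(∑ i, ENNReal.ofReal (c i) • Measure.dirac (x i)) = ∑ i, c i • f (x i) := by
  have hint : ∀ i ∈ Finset.univ, Integrable f (ENNReal.ofReal (c i) • Measure.dirac (x i)) :=
    fun i _ => (integrable_dirac enorm_lt_top).smul_measure ENNReal.ofReal_ne_top
  rw [integral_finsetSum_measure hint]
  refine Finset.sum_congr rfl fun i _ => ?_
  rw [integral_smul_measure, integral_dirac, ENNReal.toReal_ofReal (hc i)]

theorem sum_mul_max_single_sub {ι : Type*} [Fintype ι] [DecidableEq ι] (c a k : ι → ℝ)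
    (hk : ∀ i, 0 ≤ k i) (j : ι) :
    ∑ i, c i * max ((Pi.single i (a i) : ι → ℝ) j - k j) 0 = c j * max (a j - k j) 0 := by
  rw [Fintype.sum_eq_single j fun i hij => ?_, Pi.single_eq_same]
  rw [Pi.single_eq_of_ne' hij, zero_sub, max_eq_right (neg_nonpos.mpr (hk j)), mul_zero]

theorem sum_mul_single {ι : Type*} [Fintype ι] [DecidableEq ι] (w : ι → ℝ) (i : ι) (a : ℝ) :
    ∑ k, w k * (Pi.single i a : ι → ℝ) k = w i * a :=
  dotProduct_single w a i

theorem discrete_lower_bound_measure_general {n : ℕ} (ν p K w : Fin n → ℝ) (K0 : ℝ)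
    (hν : ∀ i, 0 < ν i) (hp : ∀ i, 0 ≤ p i)
    (hK : ∀ i, 0 ≤ K i) :
    let π : Measure (Fin n → ℝ) :=
      ∑ i, ENNReal.ofReal (ν i) • Measure.dirac (Pi.single i (p i / ν i + K i))
    (∀ j, ∫ x, max (x j - K j) 0 ∂π = p j) ∧
    ∫ x, max (∑ i, w i * x i - K0) 0 ∂π =
      ∑ i, max (w i * p i - ν i * (K0 - w i * K i)) 0 := by
  intro π
  have hπ (f : (Fin n → ℝ) → ℝ) :
      ∫ x, f x ∂π = ∑ i, ν i * f (Pi.single i (p i / ν i + K i)) :=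
    integral_sum_ofReal_smul_dirac ν (fun i => (hν i).le) _ f
  refine ⟨fun j => ?_, ?_⟩
  · rw [hπ, sum_mul_max_single_sub ν _ K hK j, add_sub_cancel_right,
      max_eq_left (div_nonneg (hp j) (hν j).le), mul_div_cancel₀ _ (hν j).ne']
  · rw [hπ]
    refine Finset.sum_congr rfl fun i _ => ?_
    rw [sum_mul_single, mul_max_of_nonneg _ _ (hν i).le, mul_zero]
    congr 1
    field_simp [(hν i).ne']
    ring

theorem discrete_lower_bound_measure {n : ℕ} (ν p K w : Fin n → ℝ) (K0 : ℝ)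
    (hν : ∀ i, 0 < ν i) (hsum : ∑ i, ν i = 1) (hp : ∀ i, 0 ≤ p i)
    (hK : ∀ i, 0 ≤ K i) (hw : ∀ i, 0 < w i) (hK0 : 0 ≤ K0) :
    let π : Measure (Fin n → ℝ) :=
      ∑ i, ENNReal.ofReal (ν i) • Measure.dirac (Pi.single i (p i / ν i + K i))
    (∀ j, ∫ x, max (x j - K j) 0 ∂π = p j) ∧
    ∫ x, max (∑ i, w i * x i - K0) 0 ∂π =
      ∑ i, max (w i * p i - ν i * (K0 - w i * K i)) 0 :=
  discrete_lower_bound_measure_general ν p K w K0 hν hp hK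
end

section
/- The lower bound problem value d^inf = sup over 0 ≤ ξ ≤ e of [ Σᵢ wᵢpᵢξᵢ − max_i ξᵢ(K₀ − wᵢKᵢ)₊ ] equals, by LP duality, inf over ν ≥ 0 with Σνᵢ = 1 of Σᵢ ( wᵢpᵢ − νᵢ(K₀ − wᵢKᵢ)₊ )₊. -/
/-!
Both sides are the two values of the bilinear game `L(ν, ξ) = ∑ ξᵢ (aᵢ - νᵢ bᵢ)` on the
simplex `Δ ∋ ν` times the cube `[0,1]ⁿ ∋ ξ`, with `aᵢ = wᵢ pᵢ` and `bᵢ = (K₀ - wᵢ Kᵢ)₊`.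
Minimising over `ν ∈ Δ` gives `∑ aᵢ ξᵢ - maxᵢ ξᵢ bᵢ` (attained at a vertex of `Δ`), and
maximising over `ξ ∈ [0,1]ⁿ` gives `∑ (aᵢ - νᵢ bᵢ)₊` (attained at a vertex of the cube).
By the Sion–von Neumann minimax theorem `L` has a saddle point on `Δ × [0,1]ⁿ`, and its value
is both the maximum of the first objective and the minimum of the second.
-/

open Finset

section SaddlePoint

variable {E F β : Type*} [PartialOrder β] {X : Set E} {Y : Set F} {f : E → F → β} {a : E} {b : F}

theorem IsSaddlePointOn.isGreatest_image {g : F → β} (h : IsSaddlePointOn X Y f a b)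
    (ha : a ∈ X) (hb : b ∈ Y) (hg : ∀ y ∈ Y, IsLeast ((f · y) '' X) (g y)) :
    IsGreatest (g '' Y) (f a b) := by
  obtain ⟨⟨x, hx, hxb⟩, hgb⟩ := hg b hb
  refine ⟨⟨b, hb, le_antisymm (hgb ⟨a, ha, rfl⟩) (hxb ▸ h x hx b hb)⟩, ?_⟩
  rintro _ ⟨y, hy, rfl⟩
  exact ((hg y hy).2 ⟨a, ha, rfl⟩).trans (h a ha y hy)

theorem IsSaddlePointOn.isLeast_image {g : E → β} (h : IsSaddlePointOn X Y f a b)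
    (ha : a ∈ X) (hb : b ∈ Y) (hg : ∀ x ∈ X, IsGreatest ((f x ·) '' Y) (g x)) :
    IsLeast (g '' X) (f a b) := by
  obtain ⟨⟨y, hy, hay⟩, hga⟩ := hg a ha
  refine ⟨⟨a, ha, le_antisymm (hay ▸ h a ha y hy) (hga ⟨b, hb, rfl⟩)⟩, ?_⟩
  rintro _ ⟨x, hx, rfl⟩
  exact (h x hx b hb).trans ((hg x hx).2 ⟨b, hb, rfl⟩)

end SaddlePoint

section Lagrangian

variable {ι : Type*} [Fintype ι] (a b : ι → ℝ)

def lagrangian (ν ξ : ι → ℝ) : ℝ := ∑ i, ξ i * (a i - ν i * b i)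

def primalObjective [Nonempty ι] (ξ : ι → ℝ) : ℝ :=
  ∑ i, a i * ξ i - univ.sup' univ_nonempty fun i => ξ i * b i

def dualObjective (ν : ι → ℝ) : ℝ := ∑ i, max (a i - ν i * b i) 0

theorem lagrangian_eq_sum_sub_sum (ν ξ : ι → ℝ) :
    lagrangian a b ν ξ = ∑ i, a i * ξ i - ∑ i, ν i * (ξ i * b i) := by
  simp only [lagrangian, ← sum_sub_distrib]
  exact sum_congr rfl fun i _ => by ring

theorem continuous_lagrangian_left (ξ : ι → ℝ) : Continuous (lagrangian a b · ξ) := by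
  unfold lagrangian; fun_prop

theorem continuous_lagrangian_right (ν : ι → ℝ) : Continuous (lagrangian a b ν) := by
  unfold lagrangian; fun_prop

theorem convexOn_lagrangian_left {s : Set (ι → ℝ)} (hs : Convex ℝ s) (ξ : ι → ℝ) :
    ConvexOn ℝ s (lagrangian a b · ξ) := by
  refine ((convexOn_const (∑ i, a i * ξ i) hs).sub
    ((Fintype.linearCombination ℝ fun i => ξ i * b i).concaveOn hs)).congr fun ν _ => ?_
  simp [lagrangian_eq_sum_sub_sum, Fintype.linearCombination_apply]

theorem concaveOn_lagrangian_right {s : Set (ι → ℝ)} (hs : Convex ℝ s) (ν : ι → ℝ) :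
    ConcaveOn ℝ s (lagrangian a b ν) := by
  refine ((Fintype.linearCombination ℝ fun i => a i - ν i * b i).concaveOn hs).congr
    fun ξ _ => ?_
  simp [lagrangian, Fintype.linearCombination_apply]

theorem exists_isSaddlePointOn_lagrangian [Nonempty ι] :
    ∃ ν ∈ stdSimplex ℝ ι, ∃ ξ ∈ Set.Icc 0 1,
      IsSaddlePointOn (stdSimplex ℝ ι) (Set.Icc 0 1) (lagrangian a b) ν ξ := by
  classical
  exact Sion.exists_isSaddlePointOn ⟨_, single_mem_stdSimplex ℝ (Classical.arbitrary ι)⟩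
    (convex_stdSimplex ℝ ι) (isCompact_stdSimplex ℝ ι)
    (fun ξ _ => (continuous_lagrangian_left a b ξ).lowerSemicontinuous.lowerSemicontinuousOn _)
    (fun ξ _ => (convexOn_lagrangian_left a b (convex_stdSimplex ℝ ι) ξ).quasiconvexOn)
    (convex_Icc 0 1) (Set.nonempty_Icc.2 zero_le_one) isCompact_Icc
    (fun ν _ => (continuous_lagrangian_right a b ν).upperSemicontinuous.upperSemicontinuousOn _)
    (fun ν _ => (concaveOn_lagrangian_right a b (convex_Icc 0 1) ν).quasiconcaveOn)

theorem isGreatest_lagrangian_Icc (ν : ι → ℝ) :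
    IsGreatest (lagrangian a b ν '' Set.Icc 0 1) (dualObjective a b ν) := by
  classical
  refine ⟨⟨fun i => if 0 ≤ a i - ν i * b i then 1 else 0, ⟨fun i => ?_, fun i => ?_⟩, ?_⟩, ?_⟩
  · dsimp only; split_ifs <;> norm_num
  · dsimp only; split_ifs <;> norm_num
  · refine sum_congr rfl fun i _ => ?_
    dsimp only
    split_ifs with h
    · rw [one_mul, max_eq_left h]
    · rw [zero_mul, max_eq_right (not_le.1 h).le]
  · rintro _ ⟨ξ, ⟨hξ0, hξ1⟩, rfl⟩
    refine sum_le_sum fun i _ => ?_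
    have h0 : 0 ≤ ξ i := hξ0 i
    have h1 : ξ i ≤ 1 := hξ1 i
    rcases le_total 0 (a i - ν i * b i) with h | h
    · rw [max_eq_left h]; nlinarith
    · rw [max_eq_right h]; nlinarith

theorem isLeast_lagrangian_stdSimplex [Nonempty ι] (ξ : ι → ℝ) :
    IsLeast ((lagrangian a b · ξ) '' stdSimplex ℝ ι) (primalObjective a b ξ) := by
  classical
  simp only [lagrangian_eq_sum_sub_sum, primalObjective]
  obtain ⟨j, -, hj⟩ := exists_mem_eq_sup' univ_nonempty fun i => ξ i * b i
  refine ⟨⟨Pi.single j 1, single_mem_stdSimplex ℝ j, ?_⟩, ?_⟩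
  · simp [Pi.single_apply, hj]
  · rintro _ ⟨ν, ⟨hν0, hν1⟩, rfl⟩
    refine sub_le_sub_left ?_ _
    calc ∑ i, ν i * (ξ i * b i)
        ≤ ∑ i, ν i * univ.sup' univ_nonempty (fun i => ξ i * b i) :=
          sum_le_sum fun i hi => mul_le_mul_of_nonneg_left (le_sup' (fun i => ξ i * b i) hi) (hν0 i)
      _ = univ.sup' univ_nonempty (fun i => ξ i * b i) := by rw [← sum_mul, hν1, one_mul]

theorem exists_isGreatest_primalObjective_isLeast_dualObjective [Nonempty ι] :
    ∃ v, IsGreatest (primalObjective a b '' Set.Icc 0 1) v ∧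
      IsLeast (dualObjective a b '' stdSimplex ℝ ι) v := by
  obtain ⟨ν, hν, ξ, hξ, hsaddle⟩ := exists_isSaddlePointOn_lagrangian a b
  exact ⟨_, hsaddle.isGreatest_image hν hξ fun ξ _ => isLeast_lagrangian_stdSimplex a b ξ,
    hsaddle.isLeast_image hν hξ fun ν _ => isGreatest_lagrangian_Icc a b ν⟩

end Lagrangian

theorem lower_bound_LP_duality_general {n : ℕ} (hn : 0 < n) (w p K : Fin n → ℝ) (K0 : ℝ) :
    sSup {v : ℝ | ∃ ξ : Fin n → ℝ, (∀ i, ξ i ∈ Set.Icc (0:ℝ) 1) ∧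
        v = ∑ i, w i * p i * ξ i -
          Finset.univ.sup' ⟨⟨0, hn⟩, Finset.mem_univ _⟩
            (fun i => ξ i * max (K0 - w i * K i) 0)} =
    sInf {v : ℝ | ∃ ν : Fin n → ℝ, (∀ i, 0 ≤ ν i) ∧ (∑ i, ν i = 1) ∧
        v = ∑ i, max (w i * p i - ν i * max (K0 - w i * K i) 0) 0} := by
  have : Nonempty (Fin n) := ⟨⟨0, hn⟩⟩
  obtain ⟨v, hprimal, hdual⟩ := exists_isGreatest_primalObjective_isLeast_dualObjective
    (fun i => w i * p i) fun i => max (K0 - w i * K i) 0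
  refine (Eq.trans ?_ hprimal.csSup_eq).trans (hdual.csInf_eq.symm.trans ?_)
  · congr 1
    ext v
    simp [primalObjective, Pi.le_def, forall_and, eq_comm]
  · congr 1
    ext v
    simp [dualObjective, stdSimplex, eq_comm, and_assoc]

theorem lower_bound_LP_duality {n : ℕ} (hn : 0 < n) (w p K : Fin n → ℝ) (K0 : ℝ)
    (hw : ∀ i, 0 < w i) (hp : ∀ i, 0 ≤ p i) (hK : ∀ i, 0 ≤ K i) (hK0 : 0 ≤ K0) :
    sSup {v : ℝ | ∃ ξ : Fin n → ℝ, (∀ i, ξ i ∈ Set.Icc (0:ℝ) 1) ∧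
        v = ∑ i, w i * p i * ξ i -
          Finset.univ.sup' ⟨⟨0, hn⟩, Finset.mem_univ _⟩
            (fun i => ξ i * max (K0 - w i * K i) 0)} =
    sInf {v : ℝ | ∃ ν : Fin n → ℝ, (∀ i, 0 ≤ ν i) ∧ (∑ i, ν i = 1) ∧
        v = ∑ i, max (w i * p i - ν i * max (K0 - w i * K i) 0) 0} :=
  lower_bound_LP_duality_general hn w p K K0
end

section
/- Let C(w₀,K₀) be any function on ℝ₊ⁿ × ℝ₊ that is jointly convex, positively homogeneous of degree 1, nondecreasing in w, with increments in K between −(ΔK) and 0, and satisfying C(eᵢ, Kᵢ) ≤ pᵢ for all i (eᵢ the i-th unit vector). Then for any w₀ > 0 with Σᵢ w₀ᵢ = 1 and K₀ ≥ 0: C(w₀, K₀) ≤ w₀ᵀp + (w₀ᵀK − K₀)₊. -/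
open MeasureTheory Filter

theorem tightness_abstract_bound {n : ℕ} (C : (Fin n → ℝ) → ℝ → ℝ)
    (p K w0 : Fin n → ℝ) (K0 : ℝ)
    (hp : ∀ i, 0 ≤ p i) (hK : ∀ i, 0 ≤ K i)
    (hw0 : ∀ i, 0 < w0 i) (hw0sum : ∑ i, w0 i = 1) (hK0 : 0 ≤ K0)
    (hconv : ConvexOn ℝ Set.univ (fun wK : (Fin n → ℝ) × ℝ => C wK.1 wK.2))
    (hhom : ∀ c : ℝ, 0 ≤ c → ∀ w K', C (c • w) (c * K') = c * C w K')
    (hmono : ∀ w w' : Fin n → ℝ, w ≤ w' → ∀ K', C w K' ≤ C w' K')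
    (hslope : ∀ w : Fin n → ℝ, ∀ K' K'' : ℝ, K' ≤ K'' →
      C w K'' ≤ C w K' ∧ C w K' - C w K'' ≤ K'' - K')
    (hcal : ∀ i, C (Pi.single i 1) (K i) ≤ p i) :
    C w0 K0 ≤ ∑ i, w0 i * p i + max (∑ i, w0 i * K i - K0) 0 := by
  set M := ∑ i, w0 i * K i with hM
  have hsum : (∑ i, w0 i • ((Pi.single i 1, K i + (K0 - M)) : (Fin n → ℝ) × ℝ))
      = (w0, K0) := by
    rw [Prod.ext_iff]
    constructor
    · simp only [Prod.fst_sum, Prod.smul_mk, Prod.mk.injEq]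
      funext j
      simp [Finset.sum_apply, Pi.single_apply, mul_ite, Finset.sum_ite_eq']
    · simp only [Prod.snd_sum, Prod.smul_mk, smul_eq_mul]
      have : ∑ i, w0 i * (K i + (K0 - M)) = (∑ i, w0 i * K i) + (∑ i, w0 i) * (K0 - M) := by
        rw [Finset.sum_mul]
        rw [← Finset.sum_add_distrib]
        congr 1; funext i; ring
      rw [this, hw0sum, ← hM]; ring
  have hJ : C w0 K0 ≤ ∑ i, w0 i * C (Pi.single i 1) (K i + (K0 - M)) := by
    have := hconv.map_sum_le (t := Finset.univ) (w := w0)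
      (p := fun i => ((Pi.single i 1, K i + (K0 - M)) : (Fin n → ℝ) × ℝ))
      (fun i _ => (hw0 i).le) hw0sum (fun i _ => Set.mem_univ _)
    rw [hsum] at this
    simpa using this
  have hterm : ∀ i, C (Pi.single i 1) (K i + (K0 - M)) ≤ p i + max (M - K0) 0 := by
    intro i
    rcases le_or_gt M K0 with h | h
    · have h1 := (hslope (Pi.single i 1) (K i) (K i + (K0 - M)) (by linarith)).1
      have := hcal i
      have : C (Pi.single i 1) (K i + (K0 - M)) ≤ p i := le_trans h1 this
      have hmax : (0:ℝ) ≤ max (M - K0) 0 := le_max_right _ _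
      linarith
    · have h2 := (hslope (Pi.single i 1) (K i + (K0 - M)) (K i) (by linarith)).2
      have := hcal i
      have hmax : M - K0 ≤ max (M - K0) 0 := le_max_left _ _
      linarith
  calc C w0 K0 ≤ ∑ i, w0 i * C (Pi.single i 1) (K i + (K0 - M)) := hJ
    _ ≤ ∑ i, w0 i * (p i + max (M - K0) 0) := by
        apply Finset.sum_le_sum
        intro i _
        exact mul_le_mul_of_nonneg_left (hterm i) (hw0 i).le
    _ = ∑ i, w0 i * p i + max (M - K0) 0 := by
        have : ∑ i, w0 i * (p i + max (M - K0) 0)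
            = (∑ i, w0 i * p i) + (∑ i, w0 i) * max (M - K0) 0 := by
          rw [Finset.sum_mul, ← Finset.sum_add_distrib]
          congr 1; funext i; ring
        rw [this, hw0sum]; ring
end

section
/- The function d^sup(w₀,K₀) = max_{0≤j≤n+1} [ w₀ᵀp + Σᵢ w₀ᵢ min(qᵢ−pᵢ, β_j Kᵢ) − β_j K₀ ], with β_j = (q_j−p_j)/K_j ∈ [0,1], β₀ = 0, β_{n+1} = 1, is jointly convex in (w₀, K₀), satisfies d^sup(eᵢ, Kᵢ) = pᵢ and d^sup(eᵢ, 0) = qᵢ for every i. -/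
open MeasureTheory Filter

lemma convexOn_finset_sup' {ι E : Type*} [AddCommGroup E] [Module ℝ E]
    (s : Finset ι) (hs : s.Nonempty) (f : ι → E → ℝ)
    (hf : ∀ i ∈ s, ConvexOn ℝ Set.univ (f i)) :
    ConvexOn ℝ Set.univ (fun x => s.sup' hs fun i => f i x) := by
  induction hs using Finset.Nonempty.cons_induction with
  | singleton i => simpa using hf i (by simp)
  | cons i s hi hsne ih =>
    simp only [Finset.sup'_cons, hsne]
    exact (hf i (by simp)).sup (ih fun j hj => hf j (Finset.mem_cons_of_mem hj))

theorem dsup_convex_interpolates {n : ℕ} (p q K : Fin n → ℝ)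
    (hp : ∀ i, 0 ≤ p i) (hK : ∀ i, 0 < K i)
    (hpq : ∀ i, p i < q i) (hqk : ∀ i, q i ≤ p i + K i) :
    let B : Finset ℝ :=
      insert 0 (insert 1 (Finset.image (fun j => (q j - p j) / K j) Finset.univ))
    let D : (Fin n → ℝ) → ℝ → ℝ := fun w0 K0 =>
      B.sup' (Finset.insert_nonempty _ _)
        (fun β => ∑ i, w0 i * p i + ∑ i, w0 i * min (q i - p i) (β * K i) - β * K0)
    ConvexOn ℝ Set.univ (fun wK : (Fin n → ℝ) × ℝ => D wK.1 wK.2) ∧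
    (∀ i, D (Pi.single i 1) (K i) = p i) ∧
    (∀ i, D (Pi.single i 1) 0 = q i) := by
  intro B D
  have hsingle : ∀ (i : Fin n) (f : Fin n → ℝ),
      ∑ j, (Pi.single i 1 : Fin n → ℝ) j * f j = f i := by
    intro i f
    simp [Pi.single_apply, ite_mul]
  refine ⟨?_, ?_, ?_⟩
  · have := convexOn_finset_sup' B (Finset.insert_nonempty _ _)
      (fun β (wK : (Fin n → ℝ) × ℝ) =>
        ∑ i, wK.1 i * p i + ∑ i, wK.1 i * min (q i - p i) (β * K i) - β * wK.2)
      (fun β _ => ?_)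
    · exact this
    · refine ⟨convex_univ, fun x _ y _ a b ha hb hab => le_of_eq ?_⟩
      simp only [Prod.smul_fst, Prod.smul_snd, Prod.fst_add, Prod.snd_add,
        Pi.add_apply, Pi.smul_apply, smul_eq_mul, add_mul,
        Finset.sum_add_distrib, mul_assoc, ← Finset.mul_sum]
      ring
  · intro i
    have : D (Pi.single i 1) (K i) =
        B.sup' (Finset.insert_nonempty _ _)
          (fun β => p i + min (q i - p i) (β * K i) - β * K i) := by
      simp only [D, hsingle]
    rw [this]
    apply le_antisymm
    · apply Finset.sup'_le
      intro β _
      have := min_le_right (q i - p i) (β * K i)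
      linarith
    · have h0 : (0:ℝ) ∈ B := Finset.mem_insert_self _ _
      have := Finset.le_sup' (f := fun β => p i + min (q i - p i) (β * K i) - β * K i) h0
      have hmin : min (q i - p i) (0 * K i) = 0 := by
        rw [zero_mul]
        exact min_eq_right (by linarith [hpq i])
      rw [hmin] at this
      linarith
  · intro i
    have : D (Pi.single i 1) 0 =
        B.sup' (Finset.insert_nonempty _ _)
          (fun β => p i + min (q i - p i) (β * K i) - β * 0) := by
      simp only [D, hsingle]
    rw [this]
    apply le_antisymm
    · apply Finset.sup'_le
      intro β _
      have := min_le_left (q i - p i) (β * K i)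
      linarith
    · have hb : ((q i - p i) / K i) ∈ B := by
        simp [B, Finset.mem_insert, Finset.mem_image]
      have := Finset.le_sup'
        (f := fun β => p i + min (q i - p i) (β * K i) - β * 0) hb
      have hc : (q i - p i) / K i * K i = q i - p i :=
        div_mul_cancel₀ _ (hK i).ne'
      rw [hc, min_self] at this
      linarith
end
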